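/- Using cut-off functions ψ_m : ℝ → ℝ with ψ_m ≡ 0 outside [m−2, 2m+2], ψ_m ≡ 1/√m on [m, 2m], 0 ≤ ψ_m ≤ 1/√m, and |ψ_m'| ≤ 1/√m everywhere, the functions σ_m(t) = ψ_m(t) α_λ(t) with α_λ(t) = e^{((n−1)/2 − iλ)t} satisfy, in the weighted space L²([0,∞), e^{−(n−1)t}dt): (i) ‖σ_m‖² ≥ 1, (ii) ‖ψ_m' α_λ‖² ≤ 4/m → 0, and (iii) σ_m ⇀ 0 weakly as m → ∞. -/

import Mathlib

open Real MeasureTheory Filter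

/-- The oscillating exponential exactly cancels the weight. -/
lemma cusp_norm_exp_sq (n : ℕ) (lam t : ℝ) :
    ‖Complex.exp ((((n : ℂ) - 1) / 2 - Complex.I * lam) * t)‖ ^ 2 *
      Real.exp (-((n : ℝ) - 1) * t) = 1 := by
  rw [Complex.norm_exp, ← Real.exp_nat_mul, ← Real.exp_add]
  rw [Real.exp_eq_one_iff]
  simp [Complex.mul_re, Complex.sub_re, Complex.div_re, Complex.sub_im, Complex.div_im]
  ring

lemma cusp_integrand_eq (n : ℕ) (lam : ℝ) (p t : ℝ) :
    ‖((p : ℝ) : ℂ) * Complex.exp ((((n : ℂ) - 1) / 2 - Complex.I * lam) * t)‖ ^ 2 *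
      Real.exp (-((n : ℝ) - 1) * t) = p ^ 2 := by
  rw [norm_mul, mul_pow, mul_assoc, cusp_norm_exp_sq, mul_one, Complex.norm_real,
    Real.norm_eq_abs, sq_abs]

lemma cusp_weak_integrand_norm (n : ℕ) (lam t : ℝ) (χ : ℝ → ℂ) (p : ℝ) (hp : 0 ≤ p) :
    ‖(starRingEnd ℂ) (χ t) * (((p : ℝ) : ℂ) *
        Complex.exp ((((n : ℂ) - 1) / 2 - Complex.I * lam) * t)) *
      ((Real.exp (-((n : ℝ) - 1) * t) : ℝ) : ℂ)‖
    = ‖χ t‖ * p * Real.exp (-((n : ℝ) - 1) * t / 2) := by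
  have h1 : ‖Complex.exp ((((n : ℂ) - 1) / 2 - Complex.I * lam) * t)‖
      = Real.exp (((n : ℝ) - 1) * t / 2) := by
    rw [Complex.norm_exp]
    congr 1
    simp [Complex.mul_re, Complex.sub_re, Complex.div_re, Complex.sub_im, Complex.div_im]
    ring
  rw [norm_mul, norm_mul, norm_mul, h1, RCLike.norm_conj, Complex.norm_real, Complex.norm_real,
    Real.norm_eq_abs, Real.norm_eq_abs, abs_of_nonneg hp, abs_of_nonneg (Real.exp_pos _).le]
  rw [mul_assoc ‖χ t‖, mul_assoc, ← Real.exp_add]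
  rw [show ((n:ℝ) - 1) * t / 2 + -((n:ℝ) - 1) * t = -((n:ℝ) - 1) * t / 2 by ring]
  ring

/-- Weyl-sequence properties along a cusp: with `α_λ(t) = e^{((n-1)/2 - iλ)t}`
and cut-offs `ψ_m` (vanishing outside `[m-2, 2m+2]`, equal to `1/√m` on
`[m, 2m]`, with `0 ≤ ψ_m ≤ 1/√m` and `|ψ_m'| ≤ 1/√m`), the sections
`σ_m = ψ_m α_λ` satisfy, in `L²([0,∞), e^{-(n-1)t}dt)`:
(i) `‖σ_m‖² ≥ 1`, (ii) `‖ψ_m' α_λ‖² ≤ 4/m`, (iii) `σ_m ⇀ 0` weakly. -/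
theorem cusp_weyl_sequence
    (n : ℕ) (hn : 2 ≤ n) (lam : ℝ)
    (ψ : ℕ → ℝ → ℝ)
    (hsmooth : ∀ m, ContDiff ℝ (⊤ : ℕ∞) (ψ m))
    (hsupp : ∀ m : ℕ, ∀ t : ℝ, t ∉ Set.Icc ((m : ℝ) - 2) (2 * m + 2) → ψ m t = 0)
    (hone : ∀ m : ℕ, ∀ t ∈ Set.Icc ((m : ℝ)) (2 * m), ψ m t = 1 / Real.sqrt m)
    (hbound : ∀ m, ∀ t : ℝ, 0 ≤ ψ m t ∧ ψ m t ≤ 1 / Real.sqrt m)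
    (hderiv : ∀ m, ∀ t : ℝ, |deriv (ψ m) t| ≤ 1 / Real.sqrt m) :
    (∀ m : ℕ, 1 ≤ m →
      1 ≤ ∫ t in Set.Ioi (0 : ℝ),
        ‖((ψ m t : ℝ) : ℂ) *
            Complex.exp ((((n : ℂ) - 1) / 2 - Complex.I * lam) * t)‖ ^ 2 *
          Real.exp (-((n : ℝ) - 1) * t)) ∧
    (∀ m : ℕ, 2 ≤ m →
      (∫ t in Set.Ioi (0 : ℝ),
        ‖((deriv (ψ m) t : ℝ) : ℂ) *
            Complex.exp ((((n : ℂ) - 1) / 2 - Complex.I * lam) * t)‖ ^ 2 *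
          Real.exp (-((n : ℝ) - 1) * t)) ≤ 4 / m) ∧
    (∀ χ : ℝ → ℂ,
      IntegrableOn (fun t => ‖χ t‖ ^ 2 * Real.exp (-((n : ℝ) - 1) * t))
        (Set.Ioi (0 : ℝ)) →
      Tendsto (fun m : ℕ => ∫ t in Set.Ioi (0 : ℝ),
          (starRingEnd ℂ) (χ t) *
            (((ψ m t : ℝ) : ℂ) *
              Complex.exp ((((n : ℂ) - 1) / 2 - Complex.I * lam) * t)) *
            ((Real.exp (-((n : ℝ) - 1) * t) : ℝ) : ℂ))
        atTop (nhds 0)) := by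
  -- basic facts about the cut-offs
  have hψcont : ∀ m, Continuous (ψ m) := fun m => (hsmooth m).continuous
  have hψcs : ∀ m, HasCompactSupport (ψ m) := fun m =>
    HasCompactSupport.intro isCompact_Icc (hsupp m)
  have hψsq_int : ∀ m, Integrable (fun t => ψ m t ^ 2) := fun m =>
    (((hψcont m).pow 2).integrable_of_hasCompactSupport
      (((hψcs m).comp_left (g := fun x : ℝ => x ^ 2) (by simp) : HasCompactSupport (fun t => ψ m t ^ 2))))
  have hdcont : ∀ m, Continuous (deriv (ψ m)) := fun m =>
    (hsmooth m).continuous_deriv (by simp)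
  have hdsq_int : ∀ m, Integrable (fun t => deriv (ψ m) t ^ 2) := fun m =>
    (((hdcont m).pow 2).integrable_of_hasCompactSupport
      ((((hψcs m).deriv).comp_left (g := fun x : ℝ => x ^ 2) (by simp) : HasCompactSupport (fun t => deriv (ψ m) t ^ 2))))
  -- derivative vanishes off the support and on the plateau
  have hd0 : ∀ m : ℕ, ∀ t : ℝ, t ∉ Set.Icc ((m : ℝ) - 2) (2 * m + 2) →
      deriv (ψ m) t = 0 := by
    intro m t ht
    have hopen : (Set.Icc ((m : ℝ) - 2) (2 * m + 2))ᶜ ∈ nhds t :=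
      (isClosed_Icc.isOpen_compl).mem_nhds ht
    have heq : ψ m =ᶠ[nhds t] fun _ => 0 :=
      Filter.eventuallyEq_of_mem hopen (fun x hx => hsupp m x hx)
    rw [heq.deriv_eq, deriv_const]
  have hd0' : ∀ m : ℕ, ∀ t : ℝ, t ∈ Set.Ioo ((m : ℝ)) (2 * m) →
      deriv (ψ m) t = 0 := by
    intro m t ht
    have hopen : Set.Ioo ((m : ℝ)) (2 * m) ∈ nhds t := isOpen_Ioo.mem_nhds ht
    have heq : ψ m =ᶠ[nhds t] fun _ => 1 / Real.sqrt m :=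
      Filter.eventuallyEq_of_mem hopen (fun x hx => hone m x (Set.Ioo_subset_Icc_self hx))
    rw [heq.deriv_eq, deriv_const]
  constructor
  · -- Part (i)
    intro m hm
    have hm0 : (0 : ℝ) < m := by exact_mod_cast Nat.lt_of_lt_of_le Nat.zero_lt_one hm
    have hm1 : (1 : ℝ) ≤ m := by exact_mod_cast hm
    simp only [cusp_integrand_eq]
    have hsub : Set.Icc ((m : ℝ)) (2 * m) ⊆ Set.Ioi (0 : ℝ) := fun t ht =>
      lt_of_lt_of_le hm0 ht.1
    have hval : (∫ t in Set.Icc ((m : ℝ)) (2 * m), ψ m t ^ 2) = 1 := by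
      rw [setIntegral_congr_fun measurableSet_Icc
        (fun t ht => by rw [hone m t ht])]
      rw [setIntegral_const, measureReal_def, Real.volume_Icc, smul_eq_mul]
      rw [ENNReal.toReal_ofReal (by linarith)]
      rw [div_pow, one_pow, Real.sq_sqrt hm0.le]
      field_simp
      ring
    calc (1 : ℝ) = ∫ t in Set.Icc ((m : ℝ)) (2 * m), ψ m t ^ 2 := hval.symm
      _ ≤ ∫ t in Set.Ioi (0 : ℝ), ψ m t ^ 2 := by
          apply setIntegral_mono_set ((hψsq_int m).integrableOn)
          · exact Filter.Eventually.of_forall (fun t => sq_nonneg _)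
          · exact HasSubset.Subset.eventuallyLE hsub
  refine ⟨?_, ?_⟩
  · -- Part (ii)
    intro m hm
    have hm0 : (0 : ℝ) < m := by exact_mod_cast Nat.lt_of_lt_of_le Nat.zero_lt_two hm
    have hm2 : (2 : ℝ) ≤ m := by exact_mod_cast hm
    simp only [cusp_integrand_eq]
    set S : Set ℝ := Set.Icc ((m : ℝ) - 2) m ∪ Set.Icc (2 * m) (2 * m + 2) with hS
    have hSmeas : MeasurableSet S := (measurableSet_Icc).union measurableSet_Icc
    have hpt : ∀ t : ℝ, deriv (ψ m) t ^ 2 ≤ S.indicator (fun _ => 1 / (m : ℝ)) t := by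
      intro t
      by_cases ht : t ∈ S
      · rw [Set.indicator_of_mem ht]
        have := hderiv m t
        calc deriv (ψ m) t ^ 2 = |deriv (ψ m) t| ^ 2 := (sq_abs _).symm
          _ ≤ (1 / Real.sqrt m) ^ 2 := by
              apply pow_le_pow_left₀ (abs_nonneg _) this
          _ = 1 / (m : ℝ) := by rw [div_pow, one_pow, Real.sq_sqrt hm0.le]
      · rw [Set.indicator_of_notMem ht]
        have hz : deriv (ψ m) t = 0 := by
          by_cases hbig : t ∈ Set.Icc ((m : ℝ) - 2) (2 * m + 2)
          · apply hd0' m t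
            simp only [hS, Set.mem_union, Set.mem_Icc, not_or, not_and_or, not_le] at ht
            constructor
            · rcases ht.1 with h | h
              · linarith [hbig.1]
              · exact h
            · rcases ht.2 with h | h
              · exact h
              · linarith [hbig.2]
          · exact hd0 m t hbig
        rw [hz]; norm_num
    have hind_int : Integrable (S.indicator (fun _ => 1 / (m : ℝ))) := by
      apply (integrableOn_const (μ := volume) (s := S) (C := 1 / (m : ℝ)) (ne_of_lt ?_)).integrable_indicator hSmeas
      calc volume S ≤ volume (Set.Icc ((m : ℝ) - 2) (m : ℝ)) + volume (Set.Icc (2 * (m : ℝ)) (2 * (m : ℝ) + 2)) :=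
            measure_union_le _ _
        _ < ⊤ := by
            rw [Real.volume_Icc, Real.volume_Icc]
            exact ENNReal.add_lt_top.2 ⟨ENNReal.ofReal_lt_top, ENNReal.ofReal_lt_top⟩
    have hvolS : (volume S).toReal ≤ 4 := by
      have h1 : volume S ≤ ENNReal.ofReal 4 := by
        calc volume S ≤ volume (Set.Icc ((m : ℝ) - 2) (m : ℝ)) + volume (Set.Icc (2 * (m : ℝ)) (2 * (m : ℝ) + 2)) :=
              measure_union_le _ _
          _ = ENNReal.ofReal ((m : ℝ) - ((m : ℝ) - 2)) + ENNReal.ofReal (2 * (m : ℝ) + 2 - 2 * (m : ℝ)) := by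
              rw [Real.volume_Icc, Real.volume_Icc]
          _ = ENNReal.ofReal 2 + ENNReal.ofReal 2 := by norm_num
          _ = ENNReal.ofReal 4 := by
              rw [← ENNReal.ofReal_add] <;> norm_num
      exact ENNReal.toReal_le_of_le_ofReal (by norm_num) h1
    calc (∫ t in Set.Ioi (0 : ℝ), deriv (ψ m) t ^ 2)
        ≤ ∫ t in Set.Ioi (0 : ℝ), S.indicator (fun _ => 1 / (m : ℝ)) t := by
          apply setIntegral_mono ((hdsq_int m).integrableOn) (hind_int.integrableOn) hpt
      _ ≤ ∫ t, S.indicator (fun _ => 1 / (m : ℝ)) t := by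
          apply setIntegral_le_integral hind_int
          exact Filter.Eventually.of_forall (fun t =>
            Set.indicator_nonneg (fun _ _ => by positivity) t)
      _ = (volume S).toReal * (1 / (m : ℝ)) := by
          rw [integral_indicator_const _ hSmeas, smul_eq_mul, measureReal_def]
      _ ≤ 4 * (1 / (m : ℝ)) := by
          apply mul_le_mul_of_nonneg_right hvolS (by positivity)
      _ = 4 / (m : ℝ) := by ring
  · -- Part (iii): weak convergence to 0
    intro χ hχ
    set w : ℝ → ℝ := fun t => ‖χ t‖ ^ 2 * Real.exp (-((n : ℝ) - 1) * t) with hw_def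
    have hw_nonneg : ∀ t, 0 ≤ w t := fun t => by positivity
    set D : ℕ → ℝ := fun m => ∫ t in Set.Ioi (0 : ℝ),
      (Set.Ici ((m : ℝ) - 2)).indicator w t with hD_def
    have hD_nonneg : ∀ m, 0 ≤ D m := fun m =>
      setIntegral_nonneg measurableSet_Ioi (fun t _ =>
        Set.indicator_nonneg (fun s _ => hw_nonneg s) t)
    have hind_int : ∀ m : ℕ, Integrable ((Set.Ici ((m : ℝ) - 2)).indicator w)
        (volume.restrict (Set.Ioi (0 : ℝ))) := fun m =>
      hχ.indicator measurableSet_Ici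
    have hDtend : Tendsto D atTop (nhds 0) := by
      have h := tendsto_integral_of_dominated_convergence (μ := volume.restrict (Set.Ioi (0:ℝ)))
        (F := fun m : ℕ => (Set.Ici ((m : ℝ) - 2)).indicator w)
        (f := fun _ => (0 : ℝ)) (bound := w)
        (fun m => (hind_int m).aestronglyMeasurable)
        hχ
        (fun m => Filter.Eventually.of_forall (fun t => by
          rw [Real.norm_eq_abs, abs_of_nonneg (Set.indicator_nonneg (fun s _ => hw_nonneg s) t)]
          exact Set.indicator_le_self' (fun s _ => hw_nonneg s) t))
        (Filter.Eventually.of_forall (fun t => by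
          obtain ⟨N, hN⟩ := exists_nat_gt (t + 2)
          apply tendsto_nhds_of_eventually_eq
          filter_upwards [Filter.eventually_ge_atTop N] with m hm
          apply Set.indicator_of_notMem
          simp only [Set.mem_Ici, not_le]
          have : (N : ℝ) ≤ m := by exact_mod_cast hm
          linarith))
      simpa using h
    -- bound on the mass of ψ_m²
    have hP : ∀ m : ℕ, 2 ≤ m → (∫ t in Set.Ioi (0 : ℝ), ψ m t ^ 2) ≤ 3 := by
      intro m hm
      have hm0 : (0 : ℝ) < m := by exact_mod_cast Nat.lt_of_lt_of_le Nat.zero_lt_two hm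
      have hm2 : (2 : ℝ) ≤ m := by exact_mod_cast hm
      set S : Set ℝ := Set.Icc ((m : ℝ) - 2) (2 * m + 2) with hS
      have hSmeas : MeasurableSet S := measurableSet_Icc
      have hpt : ∀ t : ℝ, ψ m t ^ 2 ≤ S.indicator (fun _ => 1 / (m : ℝ)) t := by
        intro t
        by_cases ht : t ∈ S
        · rw [Set.indicator_of_mem ht]
          have h1 := (hbound m t).1
          have h2 := (hbound m t).2
          calc ψ m t ^ 2 ≤ (1 / Real.sqrt m) ^ 2 := by
                apply pow_le_pow_left₀ h1 h2
            _ = 1 / (m : ℝ) := by rw [div_pow, one_pow, Real.sq_sqrt hm0.le]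
        · rw [Set.indicator_of_notMem ht, hsupp m t ht]; norm_num
      have hind_int2 : Integrable (S.indicator (fun _ => 1 / (m : ℝ))) := by
        apply (integrableOn_const (μ := volume) (s := S) (C := 1 / (m : ℝ)) (ne_of_lt ?_)).integrable_indicator hSmeas
        rw [Real.volume_Icc]; exact ENNReal.ofReal_lt_top
      have hvolS : (volume S).toReal ≤ (m : ℝ) + 4 := by
        rw [hS, Real.volume_Icc, ENNReal.toReal_ofReal (by linarith)]
        linarith
      calc (∫ t in Set.Ioi (0 : ℝ), ψ m t ^ 2)
          ≤ ∫ t in Set.Ioi (0 : ℝ), S.indicator (fun _ => 1 / (m : ℝ)) t :=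
            setIntegral_mono ((hψsq_int m).integrableOn) (hind_int2.integrableOn) hpt
        _ ≤ ∫ t, S.indicator (fun _ => 1 / (m : ℝ)) t := by
            apply setIntegral_le_integral hind_int2
            exact Filter.Eventually.of_forall (fun t =>
              Set.indicator_nonneg (fun _ _ => by positivity) t)
        _ = (volume S).toReal * (1 / (m : ℝ)) := by
            rw [integral_indicator_const _ hSmeas, smul_eq_mul, measureReal_def]
        _ ≤ ((m : ℝ) + 4) * (1 / (m : ℝ)) := by
            apply mul_le_mul_of_nonneg_right hvolS (by positivity)
        _ ≤ 3 := by
            rw [mul_one_div, div_le_iff₀ hm0]; linarith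
    -- the main bound
    have hmain : ∀ m : ℕ, 2 ≤ m →
        ‖∫ t in Set.Ioi (0 : ℝ),
          (starRingEnd ℂ) (χ t) *
            (((ψ m t : ℝ) : ℂ) *
              Complex.exp ((((n : ℂ) - 1) / 2 - Complex.I * lam) * t)) *
            ((Real.exp (-((n : ℝ) - 1) * t) : ℝ) : ℂ)‖
        ≤ 2 * Real.sqrt (D m) + 3 / (2 * ((m : ℝ) + 1)) := by
      intro m hm
      set ε : ℝ := Real.sqrt (D m) + 1 / ((m : ℝ) + 1) with hε_def
      have hε : 0 < ε := by
        have := Real.sqrt_nonneg (D m)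
        have : (0 : ℝ) < 1 / ((m : ℝ) + 1) := by positivity
        positivity
      set g : ℝ → ℝ := fun t => (1 / (2 * ε)) * (Set.Ici ((m : ℝ) - 2)).indicator w t
        + (ε / 2) * ψ m t ^ 2 with hg_def
      have hg_int : Integrable g (volume.restrict (Set.Ioi (0 : ℝ))) :=
        ((hind_int m).const_mul _).add (((hψsq_int m).integrableOn).const_mul _)
      have hptwise : ∀ t : ℝ,
          ‖(starRingEnd ℂ) (χ t) *
            (((ψ m t : ℝ) : ℂ) *
              Complex.exp ((((n : ℂ) - 1) / 2 - Complex.I * lam) * t)) *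
            ((Real.exp (-((n : ℝ) - 1) * t) : ℝ) : ℂ)‖ ≤ g t := by
        intro t
        rw [cusp_weak_integrand_norm n lam t χ (ψ m t) (hbound m t).1]
        by_cases ht : t ∈ Set.Ici ((m : ℝ) - 2)
        · rw [hg_def]
          simp only [Set.indicator_of_mem ht]
          set a : ℝ := ‖χ t‖ * Real.exp (-((n : ℝ) - 1) * t / 2) with ha_def
          have ha_nonneg : 0 ≤ a := by positivity
          have haw : a ^ 2 = w t := by
            have hexp : Real.exp (-((n : ℝ) - 1) * t / 2) ^ 2
                = Real.exp (-((n : ℝ) - 1) * t) := by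
              rw [sq, ← Real.exp_add]
              congr 1
              ring
            simp only [ha_def, hw_def, mul_pow, hexp]
          have key : 2 * ε * (a * ψ m t) ≤ a ^ 2 + ε ^ 2 * ψ m t ^ 2 := by
            nlinarith [sq_nonneg (a - ε * ψ m t)]
          have heq2 : (1 / (2 * ε)) * w t + (ε / 2) * ψ m t ^ 2
              = (a ^ 2 + ε ^ 2 * ψ m t ^ 2) / (2 * ε) := by
            rw [← haw]
            field_simp
          rw [heq2, le_div_iff₀ (by positivity)]
          have hlhs : ‖χ t‖ * ψ m t * Real.exp (-((n : ℝ) - 1) * t / 2) = a * ψ m t := by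
            rw [ha_def]; ring
          rw [hlhs]
          calc a * ψ m t * (2 * ε) = 2 * ε * (a * ψ m t) := by ring
            _ ≤ a ^ 2 + ε ^ 2 * ψ m t ^ 2 := key
        · have hψ0 : ψ m t = 0 := by
            apply hsupp m t
            simp only [Set.mem_Ici, not_le] at ht
            intro hc
            exact absurd hc.1 (not_le.2 ht)
          have hz : ‖χ t‖ * ψ m t * Real.exp (-((n : ℝ) - 1) * t / 2) = 0 := by
            rw [hψ0]; ring
          rw [hz]
          simp only [hg_def]
          apply add_nonneg
          · exact mul_nonneg (by positivity)
              (Set.indicator_nonneg (fun s _ => hw_nonneg s) t)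
          · positivity
      have hbound1 : ‖∫ t in Set.Ioi (0 : ℝ),
            (starRingEnd ℂ) (χ t) *
              (((ψ m t : ℝ) : ℂ) *
                Complex.exp ((((n : ℂ) - 1) / 2 - Complex.I * lam) * t)) *
              ((Real.exp (-((n : ℝ) - 1) * t) : ℝ) : ℂ)‖
          ≤ ∫ t in Set.Ioi (0 : ℝ), g t :=
        norm_integral_le_of_norm_le hg_int (Filter.Eventually.of_forall hptwise)
      have hgval : (∫ t in Set.Ioi (0 : ℝ), g t)
          = (1 / (2 * ε)) * D m + (ε / 2) * ∫ t in Set.Ioi (0 : ℝ), ψ m t ^ 2 := by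
        rw [hg_def]
        rw [integral_add ((hind_int m).const_mul _) (((hψsq_int m).integrableOn).const_mul _)]
        rw [integral_const_mul, integral_const_mul]
      have hterm1 : (1 / (2 * ε)) * D m ≤ Real.sqrt (D m) / 2 := by
        have hsd : Real.sqrt (D m) ≤ ε := by
          rw [hε_def]
          have : (0:ℝ) ≤ 1 / ((m : ℝ) + 1) := by positivity
          linarith
        rw [one_div, inv_mul_eq_div, div_le_div_iff₀ (by positivity) (by norm_num : (0:ℝ) < 2)]
        nlinarith [Real.sqrt_nonneg (D m), Real.mul_self_sqrt (hD_nonneg m), hsd]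
      have hterm2 : (ε / 2) * (∫ t in Set.Ioi (0 : ℝ), ψ m t ^ 2) ≤ (ε / 2) * 3 :=
        mul_le_mul_of_nonneg_left (hP m hm) (by positivity)
      calc ‖∫ t in Set.Ioi (0 : ℝ),
            (starRingEnd ℂ) (χ t) *
              (((ψ m t : ℝ) : ℂ) *
                Complex.exp ((((n : ℂ) - 1) / 2 - Complex.I * lam) * t)) *
              ((Real.exp (-((n : ℝ) - 1) * t) : ℝ) : ℂ)‖
          ≤ ∫ t in Set.Ioi (0 : ℝ), g t := hbound1
        _ = (1 / (2 * ε)) * D m + (ε / 2) * ∫ t in Set.Ioi (0 : ℝ), ψ m t ^ 2 := hgval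
        _ ≤ Real.sqrt (D m) / 2 + (ε / 2) * 3 := add_le_add hterm1 hterm2
        _ = 2 * Real.sqrt (D m) + 3 / (2 * ((m : ℝ) + 1)) := by
            rw [hε_def]; field_simp; ring
    -- conclude by squeezing
    apply squeeze_zero_norm' (a := fun m : ℕ => 2 * Real.sqrt (D m) + 3 / (2 * ((m : ℝ) + 1)))
    · filter_upwards [Filter.eventually_ge_atTop 2] with m hm
      exact hmain m hm
    · have h1 : Tendsto (fun m : ℕ => 2 * Real.sqrt (D m)) atTop (nhds 0) := by
        have := ((Real.continuous_sqrt.tendsto' 0 0 Real.sqrt_zero).comp hDtend).const_mul 2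
        simpa using this
      have h2 : Tendsto (fun m : ℕ => 3 / (2 * ((m : ℝ) + 1))) atTop (nhds 0) := by
        have := tendsto_one_div_add_atTop_nhds_zero_nat.const_mul (3/2 : ℝ)
        simp only [mul_zero] at this
        apply this.congr
        intro m
        field_simp
      simpa using h1.add h2
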